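/- Let O ⊂ ℂ^n be a formal CR submanifold and V its intrinsic complexification. Then O is generic in V, i.e., T_0 O + J T_0 O = T_0 V, where J is the standard complex structure. -/

import Mathlib

open MvPowerSeries Finsupp

/-- Formal partial derivative `∂_i` of a multivariate power series. -/
noncomputable def psDeriv {σ K : Type*} [DecidableEq σ] [CommRing K]
    (i : σ) (f : MvPowerSeries σ K) : MvPowerSeries σ K :=
  fun α => ((α i + 1 : ℕ) : K) * MvPowerSeries.coeff (α + Finsupp.single i 1) f

/-- A manifold ideal of codimension `k`: generated by `k` series vanishing at `0` with
linearly independent differentials at `0`. -/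
def IsManifoldIdealOn {σ : Type*} {K : Type*} [Field K]
    (I : Ideal (MvPowerSeries σ K)) (k : ℕ) : Prop :=
  ∃ F : Fin k → MvPowerSeries σ K,
    I = Ideal.span (Set.range F) ∧
    (∀ j, MvPowerSeries.constantCoeff (F j) = 0) ∧
    LinearIndependent K (fun j => fun i => MvPowerSeries.coeff (Finsupp.single i 1) (F j))

/-- The conjugation `σ` on `ℂ[[z,ζ]]`: conjugate the coefficients and swap `z ↔ ζ`. -/
noncomputable def sigmaConj {n : ℕ} (f : MvPowerSeries (Fin n ⊕ Fin n) ℂ) :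
    MvPowerSeries (Fin n ⊕ Fin n) ℂ :=
  fun α => (starRingEnd ℂ)
    (MvPowerSeries.coeff (Finsupp.equivMapDomain (Equiv.sumComm (Fin n) (Fin n)) α) f)

/-- Application of a formal `(1,0)` vector field `Σ a_j ∂_{z_j}`. -/
noncomputable def apply10 {n : ℕ} (a : Fin n → MvPowerSeries (Fin n ⊕ Fin n) ℂ)
    (f : MvPowerSeries (Fin n ⊕ Fin n) ℂ) : MvPowerSeries (Fin n ⊕ Fin n) ℂ :=
  ∑ j, a j * psDeriv (Sum.inl j) f

/-- A power series in `ℂ[[z,ζ]]` depends only on the variables in `T`. -/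
def DependsOnlyOn {n : ℕ} (f : MvPowerSeries (Fin n ⊕ Fin n) ℂ)
    (T : Set (Fin n ⊕ Fin n)) : Prop :=
  ∀ α : (Fin n ⊕ Fin n) →₀ ℕ, (∃ i ∉ T, α i ≠ 0) → MvPowerSeries.coeff α f = 0

/-- The `(1,0)` tangent space at `0` of the formal submanifold with complexified ideal `I`. -/
def H10at0 {n : ℕ} (I : Ideal (MvPowerSeries (Fin n ⊕ Fin n) ℂ)) : Set (Fin n → ℂ) :=
  {v | ∀ f ∈ I, ∑ j, v j * MvPowerSeries.coeff (Finsupp.single (Sum.inl j) 1) f = 0}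

/-- The formal submanifold with σ-invariant complexified ideal `I` is CR: every `(1,0)`
tangent vector at `0` extends to a formal `(1,0)` vector field preserving `I`. -/
def IsCRIdeal {n : ℕ} (I : Ideal (MvPowerSeries (Fin n ⊕ Fin n) ℂ)) : Prop :=
  ∀ v ∈ H10at0 I, ∃ a : Fin n → MvPowerSeries (Fin n ⊕ Fin n) ℂ,
    (∀ f ∈ I, apply10 a f ∈ I) ∧ ∀ j, MvPowerSeries.constantCoeff (a j) = v j

/-- The real tangent space at `0` of the real formal submanifold with σ-invariant
complexified ideal `I` (real vectors `v` are complexified to `(v, v̄)`). -/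
def T0Real {n : ℕ} (I : Ideal (MvPowerSeries (Fin n ⊕ Fin n) ℂ)) : Set (Fin n → ℂ) :=
  {v | ∀ f ∈ I,
    (∑ j, v j * MvPowerSeries.coeff (Finsupp.single (Sum.inl j) 1) f) +
    (∑ j, (starRingEnd ℂ) (v j) * MvPowerSeries.coeff (Finsupp.single (Sum.inr j) 1) f) = 0}

/-- The tangent space at `0` of the intrinsic complexification, defined by the ideal
`I ∩ ℂ[[z]]`, viewed as a real subspace of `ℂ^n`. -/
def T0IntrCx {n : ℕ} (I : Ideal (MvPowerSeries (Fin n ⊕ Fin n) ℂ)) : Set (Fin n → ℂ) :=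
  {v | ∀ f ∈ I, DependsOnlyOn f (Set.range Sum.inl) →
    ∑ j, v j * MvPowerSeries.coeff (Finsupp.single (Sum.inl j) 1) f = 0}

/-!
A vector `w ∈ T₀V` annihilates the `z`-differentials of `I ∩ ℂ[[z]]`. The heart of the proof is
that every `f ∈ I` whose differential at `0` has no `ζ`-part can be replaced by an element of
`I ∩ ℂ[[z]]` with the same differential. Choose `g x ∈ I` (`x ∈ K`) whose `ζ`-differentials form
an echelon basis of those of `I`; formal division by the `g x` removes the variables `ζ_K`. For
`l ∉ K` the CR condition provides `(1,0)` fields preserving `I` with prescribed values at `0`;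
their σ-conjugates are `(0,1)` fields which, on series free of `ζ_K`, form an invertible system
in the `∂_{ζ_l}`, so `I ∩ {free of ζ_K}` is stable under `∂_{ζ_l}`. Taylor's formula
`h|_{ζ_l = 0} = ∑ₖ (-ζ_l)ᵏ/k! ∂ᵏ_{ζ_l} h`, an infinite sum which stays in `I` because `I` is
finitely generated, then sets the remaining `ζ`'s to `0`.

Hence `w` extends to a tangent vector `(w, q)` of the complexification of `O`; σ-invariance gives
`(q̄, w̄)` as well, and `u = (w + q̄)/2`, `v = -i(w - q̄)/2` are real tangent vectors with
`w = u + i v`.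
-/

theorem sum_range_neg_one_pow_mul_choose {R : Type*} [Ring R] (N : ℕ) :
    ∑ k ∈ Finset.range (N + 1), (-1 : R) ^ k * N.choose k = if N = 0 then 1 else 0 := by
  have := congrArg (Int.cast : ℤ → R) (Int.alternating_sum_range_choose (n := N))
  push_cast at this
  rw [this]

namespace MvPowerSeries

variable {σ R : Type*}

section CommRing

variable [CommRing R]

def freeOf (x : σ) : Subring (MvPowerSeries σ R) where
  carrier := {f | ∀ β : σ →₀ ℕ, β x ≠ 0 → coeff β f = 0}
  zero_mem' _ _ := map_zero _
  one_mem' β hβ := by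
    classical
    rw [coeff_one, if_neg]
    rintro rfl
    exact hβ rfl
  add_mem' hf hg β hβ := by rw [map_add, hf β hβ, hg β hβ, add_zero]
  neg_mem' hf β hβ := by rw [map_neg, hf β hβ, neg_zero]
  mul_mem' {f g} hf hg β hβ := by
    classical
    rw [coeff_mul]
    refine Finset.sum_eq_zero fun p hp => ?_
    rw [Finset.HasAntidiagonal.mem_antidiagonal] at hp
    by_cases h : p.1 x = 0
    · rw [hg p.2 (by rw [← hp, Finsupp.add_apply, h, zero_add] at hβ; exact hβ), mul_zero]
    · rw [hf p.1 h, zero_mul]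

open Classical in
noncomputable def substZero (T : Set σ) (f : MvPowerSeries σ R) : MvPowerSeries σ R :=
  fun β => if ∀ i ∈ T, β i = 0 then coeff β f else 0

open Classical in
theorem coeff_substZero (T : Set σ) (f : MvPowerSeries σ R) (β : σ →₀ ℕ) :
    coeff β (substZero T f) = if ∀ i ∈ T, β i = 0 then coeff β f else 0 := rfl

theorem substZero_empty (f : MvPowerSeries σ R) : substZero ∅ f = f := by
  ext β
  rw [coeff_substZero, if_pos fun i hi => absurd hi (Set.notMem_empty i)]

theorem substZero_mem_freeOf {x : σ} {T : Set σ} (hx : x ∈ T) (f : MvPowerSeries σ R) :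
    substZero T f ∈ freeOf x := fun β hβ => by
  rw [coeff_substZero, if_neg fun h => hβ (h x hx)]

theorem substZero_mem_freeOf_of_mem {x : σ} (T : Set σ) {f : MvPowerSeries σ R}
    (hf : f ∈ freeOf x) : substZero T f ∈ freeOf x := fun β hβ => by
  rw [coeff_substZero]
  split_ifs <;> simp [hf β hβ]

theorem substZero_insert (y : σ) (T : Set σ) (f : MvPowerSeries σ R) :
    substZero (insert y T) f = substZero {y} (substZero T f) := by
  ext β
  simp only [coeff_substZero]
  split_ifs <;> simp_all

theorem coeff_single_substZero {t : σ} {T : Set σ} (ht : t ∉ T) (f : MvPowerSeries σ R) :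
    coeff (single t 1) (substZero T f) = coeff (single t 1) f := by
  rw [coeff_substZero, if_pos fun i hi => single_eq_of_ne (ne_of_mem_of_not_mem hi ht)]

noncomputable def quotX (x : σ) : MvPowerSeries σ R →ₗ[R] MvPowerSeries σ R where
  toFun f β := coeff (β + single x 1) f
  map_add' f g := by ext β; exact map_add (coeff (β + single x 1)) f g
  map_smul' r f := by ext β; exact map_smul (coeff (β + single x 1)) r f

theorem coeff_quotX (x : σ) (f : MvPowerSeries σ R) (β : σ →₀ ℕ) :
    coeff β (quotX x f) = coeff (β + single x 1) f := rfl

theorem coeff_X_mul (x : σ) (f : MvPowerSeries σ R) (β : σ →₀ ℕ) :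
    coeff β (X x * f) = if β x = 0 then 0 else coeff (β - single x 1) f := by
  rw [X, coeff_monomial_mul, one_mul]
  by_cases h : β x = 0
  · rw [if_neg (by rw [single_le_iff]; omega), if_pos h]
  · rw [if_pos (by rw [single_le_iff]; omega), if_neg h]

theorem quotX_X_mul (x : σ) (f : MvPowerSeries σ R) : quotX x (X x * f) = f := by
  ext β
  rw [coeff_quotX, coeff_X_mul, if_neg (by simp), add_tsub_cancel_right]

theorem X_mul_quotX_add_substZero (x : σ) (f : MvPowerSeries σ R) :
    X x * quotX x f + substZero {x} f = f := by
  ext β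
  rw [map_add, coeff_X_mul, coeff_substZero]
  simp only [Set.mem_singleton_iff, forall_eq]
  split_ifs with h
  · rw [zero_add]
  · rw [coeff_quotX, tsub_add_cancel_of_le (single_le_iff.mpr (by omega)), add_zero]

theorem quotX_eq_zero_of_mem_freeOf {x : σ} {f : MvPowerSeries σ R} (hf : f ∈ freeOf x) :
    quotX x f = 0 := by
  ext β
  exact hf _ (by simp)

theorem quotX_mul_of_mem_freeOf {x : σ} (u : MvPowerSeries σ R) {w : MvPowerSeries σ R}
    (hw : w ∈ freeOf x) : quotX x (u * w) = quotX x u * w := by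
  conv_lhs => rw [← X_mul_quotX_add_substZero x u]
  rw [add_mul, mul_assoc, map_add, quotX_X_mul,
    quotX_eq_zero_of_mem_freeOf (mul_mem (substZero_mem_freeOf (Set.mem_singleton x) u) hw),
    add_zero]

theorem quotX_mem_freeOf {x y : σ} (hyx : y ≠ x) {f : MvPowerSeries σ R} (hf : f ∈ freeOf y) :
    quotX x f ∈ freeOf y := fun β hβ => by
  rw [coeff_quotX]
  exact hf _ (by simp [hyx.symm, hβ])

theorem coeff_mul_eq_of_coeff_eq {β : σ →₀ ℕ} {u u' : MvPowerSeries σ R}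
    (h : ∀ γ ≤ β, coeff γ u = coeff γ u') (v : MvPowerSeries σ R) :
    coeff β (u * v) = coeff β (u' * v) := by
  classical
  rw [coeff_mul, coeff_mul]
  refine Finset.sum_congr rfl fun p hp => ?_
  rw [h p.1 (Finset.HasAntidiagonal.mem_antidiagonal.mp hp ▸ le_self_add)]

theorem coeff_single_one_mul (t : σ) (f g : MvPowerSeries σ R) :
    coeff (single t 1) (f * g) =
      constantCoeff f * coeff (single t 1) g + coeff (single t 1) f * constantCoeff g := by
  classical
  rw [coeff_mul, antidiagonal_single, Finset.sum_map]
  have h1 : Finset.HasAntidiagonal.antidiagonal (1 : ℕ) = {(0, 1), (1, 0)} := by decide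
  simp [h1, single_zero]

theorem coeff_rename_equiv {τ : Type*} (e : σ ≃ τ) (f : MvPowerSeries σ R)
    (α : τ →₀ ℕ) :
    coeff α (rename e f) = coeff (equivMapDomain e.symm α) f := by
  have hα : α = embDomain e.toEmbedding (equivMapDomain e.symm α) := by
    ext i
    obtain ⟨j, rfl⟩ := e.surjective i
    rw [show e j = e.toEmbedding j from rfl, embDomain_apply_self]
    simp
  conv_lhs => rw [hα]
  exact coeff_embDomain_rename _ f _

section Elimination

variable (x : σ) (g : MvPowerSeries σ R)

-- Division by `g`, whose `x`-coefficient is `1`: each step subtracts `quotX x F * g`, which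
-- cancels the `x`-divisible part `X x * quotX x F` of `F` up to terms of higher order.
noncomputable def elimSeq (f : MvPowerSeries σ R) : ℕ → MvPowerSeries σ R
  | 0 => f
  | k + 1 => elimSeq f k - quotX x (elimSeq f k) * g

variable (f : MvPowerSeries σ R)

theorem elimSeq_eq_sub_sum_mul (k : ℕ) :
    elimSeq x g f k = f - (∑ i ∈ Finset.range k, quotX x (elimSeq x g f i)) * g := by
  induction k with
  | zero => simp [elimSeq]
  | succ k ih => rw [elimSeq, Finset.sum_range_succ, add_mul, ← sub_sub, ← ih]

theorem quotX_elimSeq_succ (k : ℕ) :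
    quotX x (elimSeq x g f (k + 1)) =
      quotX x (elimSeq x g f k) * (1 - quotX x g) -
        quotX x (quotX x (elimSeq x g f k)) * substZero {x} g := by
  set A := quotX x (elimSeq x g f k)
  have hg : A * g = X x * (A * quotX x g) + A * substZero {x} g := by
    conv_lhs => rw [← X_mul_quotX_add_substZero x g]
    ring
  rw [elimSeq, map_sub, hg, map_add, quotX_X_mul,
    quotX_mul_of_mem_freeOf _ (substZero_mem_freeOf (Set.mem_singleton x) g)]
  ring

variable [DecidableEq σ]

-- With `x` of weight 1 and all other variables of weight 2, `substZero {x} g` has order `≥ 2`,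
-- so each division step gains order (`le_ord_quotX_elimSeq`).
def elimWeight : σ → ℕ := Function.update (fun _ => 2) x 1

local notation "ord" => weightedOrder (elimWeight x)

theorem weight_elimWeight_add_single (β : σ →₀ ℕ) :
    weight (elimWeight x) (β + single x 1) = weight (elimWeight x) β + 1 := by
  rw [map_add, weight_single, elimWeight, Function.update_self, smul_eq_mul, mul_one]

theorem one_le_weight_elimWeight {β : σ →₀ ℕ} (hβ : β ≠ 0) :
    1 ≤ weight (elimWeight x) β := by
  obtain ⟨i, hi⟩ := Finsupp.ne_iff.mp hβ
  refine le_trans ?_ (le_weight_of_ne_zero' _ hi)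
  rw [elimWeight, Function.update_apply]
  split_ifs <;> omega

theorem two_le_weight_elimWeight {β : σ →₀ ℕ} (hx : β x = 0) (hβ : β ≠ 0) :
    2 ≤ weight (elimWeight x) β := by
  obtain ⟨i, hi⟩ := Finsupp.ne_iff.mp hβ
  have hix : i ≠ x := by rintro rfl; exact hi hx
  refine le_trans ?_ (le_weight_of_ne_zero' _ hi)
  rw [elimWeight, Function.update_of_ne hix]

theorem one_le_ord_of_constantCoeff_eq_zero {f : MvPowerSeries σ R} (hf : constantCoeff f = 0) :
    1 ≤ ord f := by
  refine nat_le_weightedOrder (n := 1) _ fun β hβ => ?_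
  obtain rfl : β = 0 := by
    by_contra h
    exact absurd (one_le_weight_elimWeight x h) (by omega)
  rwa [coeff_zero_eq_constantCoeff_apply]

theorem two_le_ord_substZero {f : MvPowerSeries σ R} (hf : constantCoeff f = 0) :
    2 ≤ ord (substZero {x} f) := by
  refine nat_le_weightedOrder (n := 2) _ fun β hβ => ?_
  by_cases hx : β x = 0
  · obtain rfl : β = 0 := by
      by_contra h
      exact absurd (two_le_weight_elimWeight x hx h) (by omega)
    rwa [coeff_substZero, if_pos (by simp), coeff_zero_eq_constantCoeff_apply]
  · exact substZero_mem_freeOf (Set.mem_singleton x) f β hx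

theorem ord_le_ord_quotX_add_one (f : MvPowerSeries σ R) : ord f ≤ ord (quotX x f) + 1 := by
  by_cases h : quotX x f = 0
  · simp [h]
  obtain ⟨β, hβ, hw⟩ := exists_coeff_ne_zero_and_weightedOrder (elimWeight x)
    ((ne_zero_iff_weightedOrder_finite _).mp h)
  have hf := weightedOrder_le (elimWeight x) (f := f) (d := β + single x 1) hβ
  rwa [weight_elimWeight_add_single, Nat.cast_add, Nat.cast_one, hw] at hf

theorem min_ord_le_ord_sub (f g : MvPowerSeries σ R) : min (ord f) (ord g) ≤ ord (f - g) := by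
  rw [sub_eq_add_neg, ← weightedOrder_neg _ g]
  exact min_weightedOrder_le_add _

variable {g}

theorem le_ord_quotX_elimSeq (hg0 : constantCoeff g = 0) (hgx : coeff (single x 1) g = 1)
    (k : ℕ) : (k : ℕ∞) ≤ ord (quotX x (elimSeq x g f k)) := by
  induction k with
  | zero => simp
  | succ k ih =>
    have hU : 1 ≤ ord (1 - quotX x g) := by
      refine one_le_ord_of_constantCoeff_eq_zero x ?_
      rw [map_sub, map_one, ← coeff_zero_eq_constantCoeff_apply, coeff_quotX, zero_add, hgx,
        sub_self]
    have hB := two_le_ord_substZero x hg0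
    rw [quotX_elimSeq_succ]
    refine le_trans (le_min ?_ ?_) (min_ord_le_ord_sub x _ _)
    · exact le_trans (by push_cast; gcongr) (le_weightedOrder_mul _)
    · refine le_trans ?_ (le_weightedOrder_mul _)
      calc ((k + 1 : ℕ) : ℕ∞) = k + 1 := by push_cast; rfl
        _ ≤ ord (quotX x (quotX x (elimSeq x g f k))) + 1 + 1 :=
          add_le_add (ih.trans (ord_le_ord_quotX_add_one x _)) le_rfl
        _ ≤ _ := by rw [add_assoc, one_add_one_eq_two]; exact add_le_add le_rfl hB

-- The sum of the series `∑ₖ quotX x (elimSeq x g f k)`, whose `k`-th term has order `≥ k`.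
variable (g) in
noncomputable def elimMul : MvPowerSeries σ R := fun β =>
  coeff β (∑ i ∈ Finset.range (weight (elimWeight x) β + 1), quotX x (elimSeq x g f i))

theorem coeff_elimMul_def (β : σ →₀ ℕ) :
    coeff β (elimMul x g f) = coeff β
      (∑ i ∈ Finset.range (weight (elimWeight x) β + 1), quotX x (elimSeq x g f i)) := rfl

theorem coeff_elimMul_of_weight_lt (hg0 : constantCoeff g = 0) (hgx : coeff (single x 1) g = 1)
    {β : σ →₀ ℕ} {N : ℕ} (hN : weight (elimWeight x) β < N) :
    coeff β (elimMul x g f) =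
      coeff β (∑ i ∈ Finset.range N, quotX x (elimSeq x g f i)) := by
  rw [coeff_elimMul_def, map_sum, map_sum]
  refine Finset.sum_subset (Finset.range_subset_range.mpr (by omega)) fun k _ hk => ?_
  refine coeff_eq_zero_of_lt_weightedOrder _
    (lt_of_lt_of_le ?_ (le_ord_quotX_elimSeq x f hg0 hgx k))
  simp only [Finset.mem_range, not_lt] at hk
  exact_mod_cast (by omega : weight (elimWeight x) β < k)

variable (g) in
noncomputable def elimRem : MvPowerSeries σ R := f - elimMul x g f * g

theorem elimRem_mem_freeOf (hg0 : constantCoeff g = 0)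
    (hgx : coeff (single x 1) g = 1) : elimRem x g f ∈ freeOf x := by
  intro β hβ
  have hle : single x 1 ≤ β := single_le_iff.mpr (by omega)
  have hwt : weight (elimWeight x) (β - single x 1) + 1 = weight (elimWeight x) β := by
    rw [← weight_elimWeight_add_single, tsub_add_cancel_of_le hle]
  set N := weight (elimWeight x) β + 1
  have hmul : coeff β (elimMul x g f * g) =
      coeff β ((∑ i ∈ Finset.range N, quotX x (elimSeq x g f i)) * g) := by
    refine coeff_mul_eq_of_coeff_eq (fun γ hγ => coeff_elimMul_of_weight_lt x f hg0 hgx ?_) g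
    obtain ⟨δ, hδ⟩ := le_iff_exists_add.mp hγ
    have : weight (elimWeight x) β = weight (elimWeight x) γ + weight (elimWeight x) δ := by
      rw [hδ, map_add]
    omega
  rw [elimRem, map_sub, hmul, ← map_sub, ← elimSeq_eq_sub_sum_mul,
    ← X_mul_quotX_add_substZero x (elimSeq x g f N), map_add,
    substZero_mem_freeOf (Set.mem_singleton x) _ β hβ, add_zero, coeff_X_mul, if_neg hβ]
  refine coeff_eq_zero_of_lt_weightedOrder _
    (lt_of_lt_of_le ?_ (le_ord_quotX_elimSeq x f hg0 hgx N))
  exact_mod_cast (by omega : weight (elimWeight x) (β - single x 1) < N)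

theorem constantCoeff_elimMul : constantCoeff (elimMul x g f) = coeff (single x 1) f := by
  rw [← coeff_zero_eq_constantCoeff_apply]
  rw [coeff_elimMul_def, map_zero, zero_add, Finset.sum_range_one, coeff_quotX, zero_add]
  rfl

theorem elimMul_mem_freeOf {y : σ} (hyx : y ≠ x) (hf : f ∈ freeOf y) (hg : g ∈ freeOf y) :
    elimMul x g f ∈ freeOf y := by
  have hseq : ∀ k, elimSeq x g f k ∈ freeOf y := fun k => by
    induction k with
    | zero => exact hf
    | succ k ih => exact sub_mem ih (mul_mem (quotX_mem_freeOf hyx ih) hg)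
  intro β hβ
  rw [coeff_elimMul_def]
  exact sum_mem (fun k _ => quotX_mem_freeOf hyx (hseq k)) β hβ

theorem elimRem_mem_freeOf_of_ne {y : σ} (hyx : y ≠ x) (hf : f ∈ freeOf y)
    (hg : g ∈ freeOf y) :
    elimRem x g f ∈ freeOf y :=
  sub_mem hf (mul_mem (elimMul_mem_freeOf x f hyx hf hg) hg)

theorem coeff_single_elimRem (hg0 : constantCoeff g = 0) (t : σ) :
    coeff (single t 1) (elimRem x g f) =
      coeff (single t 1) f - coeff (single x 1) f * coeff (single t 1) g := by
  rw [elimRem, map_sub, coeff_single_one_mul, hg0, mul_zero, add_zero, constantCoeff_elimMul]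

theorem elimRem_mem {I : Ideal (MvPowerSeries σ R)} (hf : f ∈ I) (hg : g ∈ I) :
    elimRem x g f ∈ I :=
  I.sub_mem hf (I.mul_mem_left _ hg)

theorem coeff_single_elimRem_of_coeff_eq_zero (hg0 : constantCoeff g = 0)
    (hfx : coeff (single x 1) f = 0) (t : σ) :
    coeff (single t 1) (elimRem x g f) = coeff (single t 1) f := by
  rw [coeff_single_elimRem x f hg0, hfx, zero_mul, sub_zero]

theorem exists_mem_forall_mem_freeOf {I : Ideal (MvPowerSeries σ R)}
    (hI0 : I ≤ RingHom.ker constantCoeff) (S : Finset σ) :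
    ∀ g : σ → MvPowerSeries σ R, (∀ x ∈ S, g x ∈ I) →
    (∀ x ∈ S, ∀ x' ∈ S, coeff (single x' 1) (g x) = if x = x' then 1 else 0) →
    ∀ f ∈ I, (∀ x ∈ S, coeff (single x 1) f = 0) →
    ∃ h ∈ I, (∀ x ∈ S, h ∈ freeOf x) ∧
      (∀ t, coeff (single t 1) h = coeff (single t 1) f) ∧
      ∀ y, f ∈ freeOf y → (∀ x ∈ S, g x ∈ freeOf y) → h ∈ freeOf y := by
  -- The last clause keeps the variables eliminated first free during the later steps.
  induction S using Finset.induction_on with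
  | empty => exact fun _ _ _ f hf _ => ⟨f, hf, by simp, fun _ => rfl, fun _ hy _ => hy⟩
  | insert x₀ S hx₀ ih =>
    intro g hgI hδ f hf hfS
    have hmem₀ := Finset.mem_insert_self x₀ S
    have hmem {x : σ} : x ∈ S → x ∈ insert x₀ S := Finset.mem_insert_of_mem
    have hg₀0 : constantCoeff (g x₀) = 0 := hI0 (hgI x₀ hmem₀)
    have hg₀x : coeff (single x₀ 1) (g x₀) = 1 := by simpa using hδ x₀ hmem₀ x₀ hmem₀
    have hlin (x : σ) (hx : x ∈ S) :=
      coeff_single_elimRem_of_coeff_eq_zero x₀ (g x) hg₀0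
        (by rw [hδ x (hmem hx) x₀ hmem₀, if_neg (ne_of_mem_of_not_mem hx hx₀)])
    have hflin := coeff_single_elimRem_of_coeff_eq_zero x₀ f hg₀0 (hfS x₀ hmem₀)
    obtain ⟨h, hI, hS, hh, hpres⟩ := ih (fun x => elimRem x₀ (g x₀) (g x))
      (fun x hx => elimRem_mem _ _ (hgI x (hmem hx)) (hgI x₀ hmem₀))
      (fun x hx x' hx' => by rw [hlin x hx]; exact hδ x (hmem hx) x' (hmem hx'))
      (elimRem x₀ (g x₀) f) (elimRem_mem _ _ hf (hgI x₀ hmem₀))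
      (fun x hx => by rw [hflin]; exact hfS x (hmem hx))
    have hx₀h : h ∈ freeOf x₀ := hpres x₀ (elimRem_mem_freeOf _ _ hg₀0 hg₀x)
      fun x _ => elimRem_mem_freeOf _ _ hg₀0 hg₀x
    refine ⟨h, hI, Finset.forall_mem_insert _ _ _ |>.mpr ⟨hx₀h, hS⟩,
      fun t => by rw [hh, hflin], fun y hyf hyg => ?_⟩
    rcases eq_or_ne y x₀ with rfl | hy
    · exact hx₀h
    · exact hpres y (elimRem_mem_freeOf_of_ne _ _ hy hyf (hyg x₀ hmem₀)) fun x hx =>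
        elimRem_mem_freeOf_of_ne _ _ hy (hyg x (hmem hx)) (hyg x₀ hmem₀)

end Elimination

theorem coeff_X_pow_mul_of_lt {y : σ} {k : ℕ} {γ : σ →₀ ℕ} (hγ : γ y < k)
    (u : MvPowerSeries σ R) : coeff γ (X y ^ k * u) = 0 := by
  rw [X_pow_eq, coeff_monomial_mul, if_neg (by rw [single_le_iff]; omega)]

theorem exists_mem_coeff_eq_sum_X_pow_mul {I : Ideal (MvPowerSeries σ R)} (hI : I.FG) (y : σ)
    {a : ℕ → MvPowerSeries σ R} (ha : ∀ k, a k ∈ I) :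
    ∃ s ∈ I, ∀ β : σ →₀ ℕ,
      coeff β s = coeff β (∑ k ∈ Finset.range (β y + 1), X y ^ k * a k) := by
  obtain ⟨d, F, hF⟩ := Submodule.fg_iff_exists_fin_generating_family.mp hI
  have hFI : ∀ j, F j ∈ I := fun j => hF ▸ Ideal.subset_span ⟨j, rfl⟩
  choose u hu using fun k => Ideal.mem_span_range_iff_exists_fun.mp (hF ▸ ha k)
  -- With `a k = ∑ⱼ u k j * F j`, the series `∑ₖ X y ^ k * u k j` are defined coefficientwise.
  let G : Fin d → MvPowerSeries σ R := fun j β =>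
    coeff β (∑ k ∈ Finset.range (β y + 1), X y ^ k * u k j)
  refine ⟨∑ j, G j * F j, sum_mem fun j _ => I.mul_mem_left _ (hFI j), fun β => ?_⟩
  have hG : ∀ j, ∀ γ ≤ β, coeff γ (G j) =
      coeff γ (∑ k ∈ Finset.range (β y + 1), X y ^ k * u k j) := fun j γ hγ => by
    change coeff γ (∑ k ∈ Finset.range (γ y + 1), X y ^ k * u k j) = _
    rw [map_sum, map_sum]
    refine Finset.sum_subset (Finset.range_subset_range.mpr (by have := hγ y; omega))
      fun k _ hk => coeff_X_pow_mul_of_lt (by simp at hk; omega) _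
  rw [map_sum, Finset.sum_congr rfl fun j _ => coeff_mul_eq_of_coeff_eq (hG j) (F j), ← map_sum]
  congr 1
  simp_rw [Finset.sum_mul, mul_assoc, ← hu, Finset.mul_sum]
  exact Finset.sum_comm

section Derivative

variable [DecidableEq σ]

theorem coeff_psDeriv (i : σ) (f : MvPowerSeries σ R) (α : σ →₀ ℕ) :
    coeff α (psDeriv i f) = ((α i + 1 : ℕ) : R) * coeff (α + single i 1) f := rfl

theorem psDeriv_eq_zero_of_mem_freeOf {i : σ} {f : MvPowerSeries σ R} (hf : f ∈ freeOf i) :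
    psDeriv i f = 0 := by
  ext α
  rw [coeff_psDeriv, hf _ (by simp), mul_zero, map_zero]

theorem psDeriv_mem_freeOf {y : σ} (i : σ) {f : MvPowerSeries σ R} (hf : f ∈ freeOf y) :
    psDeriv i f ∈ freeOf y := fun β hβ => by
  rw [coeff_psDeriv, hf _ (by rw [Finsupp.add_apply]; omega), mul_zero]

theorem coeff_iterate_psDeriv (y : σ) (h : MvPowerSeries σ R) (k : ℕ) (δ : σ →₀ ℕ) :
    coeff δ ((psDeriv y)^[k] h) =
      ((δ y + 1).ascFactorial k : R) * coeff (δ + single y k) h := by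
  induction k generalizing h δ with
  | zero => simp
  | succ k ih =>
    rw [Function.iterate_succ_apply, ih, coeff_psDeriv, Nat.ascFactorial_succ, add_assoc,
      ← single_add]
    simp only [Finsupp.add_apply, single_eq_same]
    push_cast
    ring

open Nat in
theorem coeff_X_pow_mul_iterate_psDeriv {y : σ} {k : ℕ} {β : σ →₀ ℕ} (hk : k ≤ β y)
    (h : MvPowerSeries σ R) :
    coeff β (X y ^ k * (psDeriv y)^[k] h) = (k ! * (β y).choose k : R) * coeff β h := by
  have hle : single y k ≤ β := single_le_iff.mpr hk
  rw [X_pow_eq, coeff_monomial_mul, if_pos hle, one_mul, coeff_iterate_psDeriv,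
    tsub_add_cancel_of_le hle, Finsupp.tsub_apply, single_eq_same,
    Nat.ascFactorial_eq_factorial_mul_choose, Nat.sub_add_cancel hk]
  push_cast
  ring

end Derivative

end CommRing

section Field

variable [Field R] [CharZero R] [DecidableEq σ]

open Nat in
theorem coeff_sum_X_pow_mul_iterate_psDeriv (y : σ) (h : MvPowerSeries σ R) (β : σ →₀ ℕ) :
    coeff β (∑ k ∈ Finset.range (β y + 1),
        X y ^ k * (C ((-1) ^ k / k ! : R) * (psDeriv y)^[k] h)) =
      coeff β (substZero {y} h) := by
  have hterm : ∀ k ∈ Finset.range (β y + 1),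
      coeff β (X y ^ k * (C ((-1) ^ k / k ! : R) * (psDeriv y)^[k] h)) =
        (-1) ^ k * (β y).choose k * coeff β h := fun k hk => by
    rw [mul_left_comm, coeff_C_mul,
      coeff_X_pow_mul_iterate_psDeriv (Nat.lt_succ_iff.mp (Finset.mem_range.mp hk))]
    field_simp [Nat.cast_ne_zero.mpr (factorial_ne_zero k)]
  rw [map_sum, Finset.sum_congr rfl hterm, ← Finset.sum_mul, sum_range_neg_one_pow_mul_choose,
    coeff_substZero]
  simp

theorem substZero_mem_of_iterate_psDeriv_mem {I : Ideal (MvPowerSeries σ R)} (hI : I.FG)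
    (y : σ) {h : MvPowerSeries σ R} (hD : ∀ k, (psDeriv y)^[k] h ∈ I) :
    substZero {y} h ∈ I := by
  obtain ⟨s, hs, hcoeff⟩ := exists_mem_coeff_eq_sum_X_pow_mul hI y
    (fun k => I.mul_mem_left (C ((-1) ^ k / k.factorial : R)) (hD k))
  convert hs using 1
  ext β
  rw [hcoeff, coeff_sum_X_pow_mul_iterate_psDeriv]

end Field

end MvPowerSeries

section Echelon

variable {F M ι : Type*} [Field F] [AddCommGroup M] [Module F M] [DecidableEq ι]
  (W : Submodule F M) (p : M →ₗ[F] ι → F)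

def IsDeltaFamily (K : Finset ι) (g : ι → M) : Prop :=
  ∀ x ∈ K, g x ∈ W ∧ ∀ x' ∈ K, p (g x) x' = if x = x' then 1 else 0

variable {W p}

theorem IsDeltaFamily.insert {K : Finset ι} {g : ι → M} (hg : IsDeltaFamily W p K g)
    {r : M} (hr : r ∈ W) (hrK : ∀ x ∈ K, p r x = 0) {j : ι} (hj : p r j ≠ 0) :
    ∃ g', IsDeltaFamily W p (insert j K) g' := by
  have hjK : j ∉ K := fun h => hj (hrK j h)
  set r' := (p r j)⁻¹ • r
  have hr'j : p r' j = 1 := by simp [r', hj]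
  have hr'K : ∀ x ∈ K, p r' x = 0 := fun x hx => by simp [r', hrK x hx]
  refine ⟨fun x => if x = j then r' else g x - p (g x) j • r', fun x hx => ?_⟩
  rcases Finset.mem_insert.mp hx with rfl | hx
  · refine ⟨by simpa using W.smul_mem _ hr, fun x' hx' => ?_⟩
    rcases Finset.mem_insert.mp hx' with rfl | hx'
    · simp [hr'j]
    · simp [hr'K x' hx', ne_of_mem_of_not_mem hx' hjK |>.symm]
  · have hxj : x ≠ j := ne_of_mem_of_not_mem hx hjK
    refine ⟨by simpa [hxj] using W.sub_mem (hg x hx).1 (W.smul_mem _ (W.smul_mem _ hr)),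
      fun x' hx' => ?_⟩
    rcases Finset.mem_insert.mp hx' with rfl | hx'
    · simp [hxj, hr'j]
    · simp [hxj, hr'K x' hx', (hg x hx).2 x' hx']

variable (W p) in
theorem exists_isDeltaFamily_spanning [Fintype ι] :
    ∃ (K : Finset ι) (g : ι → M), IsDeltaFamily W p K g ∧
      ∀ m ∈ W, p m = ∑ x ∈ K, p m x • p (g x) := by
  classical
  obtain ⟨K, hK, hmax⟩ := Finset.exists_max_image
    (Finset.univ.filter fun K => ∃ g, IsDeltaFamily W p K g) Finset.card
    ⟨∅, Finset.mem_filter.mpr ⟨Finset.mem_univ _, 0, by simp [IsDeltaFamily]⟩⟩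
  obtain ⟨g, hg⟩ := (Finset.mem_filter.mp hK).2
  refine ⟨K, g, hg, fun m hm => ?_⟩
  set r := m - ∑ x ∈ K, p m x • g x
  have hrW : r ∈ W := W.sub_mem hm (W.sum_mem fun x hx => W.smul_mem _ (hg x hx).1)
  have hpr : p r = p m - ∑ x ∈ K, p m x • p (g x) := by simp [r]
  have hrK : ∀ x' ∈ K, p r x' = 0 := fun x' hx' => by
    rw [hpr, Pi.sub_apply, Finset.sum_apply, Finset.sum_eq_single x']
    · simp [(hg x' hx').2 x' hx']
    · intro x hx hxx'; simp [(hg x hx).2 x' hx', hxx']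
    · exact fun h => absurd hx' h
  suffices p r = 0 by rwa [hpr, sub_eq_zero] at this
  by_contra hne
  obtain ⟨j, hj⟩ := Function.ne_iff.mp hne
  obtain ⟨g', hg'⟩ := hg.insert hrW hrK hj
  have hjK : j ∉ K := fun h => hj (hrK j h)
  have := hmax _ (Finset.mem_filter.mpr ⟨Finset.mem_univ _, g', hg'⟩)
  rw [Finset.card_insert_of_notMem hjK] at this
  omega

end Echelon

theorem Matrix.mem_ideal_of_mulVec_mem {ι R : Type*} [Fintype ι] [DecidableEq ι] [CommRing R]
    {I : Ideal R} {M : Matrix ι ι R} (hM : IsUnit M.det) {v : ι → R}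
    (hv : ∀ i, (M.mulVec v) i ∈ I) (i : ι) : v i ∈ I := by
  rw [← Matrix.one_mulVec v, ← Matrix.nonsing_inv_mul _ hM, ← Matrix.mulVec_mulVec]
  exact I.sum_mem fun j _ => I.mul_mem_left _ (hv j)

namespace FormalCR

open Matrix MvPowerSeries

variable {n : ℕ}

local notation "𝒪" => MvPowerSeries (Fin n ⊕ Fin n) ℂ

noncomputable def dz : 𝒪 →ₗ[ℂ] Fin n → ℂ :=
  LinearMap.pi fun j => coeff (single (Sum.inl j) 1)

noncomputable def dζ : 𝒪 →ₗ[ℂ] Fin n → ℂ :=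
  LinearMap.pi fun j => coeff (single (Sum.inr j) 1)

theorem dz_apply (f : 𝒪) (j : Fin n) : dz f j = coeff (single (Sum.inl j) 1) f := rfl

-- `(a, b)` stands for the tangent vector `∑ⱼ aⱼ ∂_{zⱼ} + bⱼ ∂_{ζⱼ}` at `0`.
def annihilator (I : Ideal 𝒪) : Submodule ℂ ((Fin n → ℂ) × (Fin n → ℂ)) where
  carrier := {p | ∀ f ∈ I, p.1 ⬝ᵥ dz f + p.2 ⬝ᵥ dζ f = 0}
  zero_mem' _ _ := by simp
  add_mem' hp hq f hf := by
    simp only [Prod.fst_add, Prod.snd_add, add_dotProduct]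
    linear_combination hp f hf + hq f hf
  smul_mem' c p hp f hf := by
    simp only [Prod.smul_fst, Prod.smul_snd, smul_dotProduct, smul_eq_mul]
    linear_combination c * hp f hf

theorem mem_T0Real_iff {I : Ideal 𝒪} {v : Fin n → ℂ} :
    v ∈ T0Real I ↔ (v, star v) ∈ annihilator I := Iff.rfl

theorem dζ_eq_zero_of_dependsOnlyOn {f : 𝒪} (hf : DependsOnlyOn f (Set.range Sum.inl)) :
    dζ f = 0 := funext fun j => hf _ ⟨Sum.inr j, by simp, by simp⟩

theorem fst_mem_T0IntrCx_of_mem_annihilator {I : Ideal 𝒪}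
    {p : (Fin n → ℂ) × (Fin n → ℂ)} (hp : p ∈ annihilator I) : p.1 ∈ T0IntrCx I := by
  intro f hf hdep
  have := hp f hf
  rwa [dζ_eq_zero_of_dependsOnlyOn hdep, dotProduct_zero, add_zero] at this

theorem coeff_sigmaConj (f : 𝒪) (α : Fin n ⊕ Fin n →₀ ℕ) :
    coeff α (sigmaConj f) =
      starRingEnd ℂ (coeff (equivMapDomain (Equiv.sumComm (Fin n) (Fin n)) α) f) := rfl

noncomputable def sigmaHom : 𝒪 →+* 𝒪 :=
  (MvPowerSeries.map (starRingEnd ℂ)).comp (rename (Equiv.sumComm (Fin n) (Fin n))).toRingHom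

theorem sigmaHom_apply (f : 𝒪) : sigmaHom f = sigmaConj f := by
  ext α
  rw [coeff_sigmaConj, sigmaHom, RingHom.comp_apply, coeff_map]
  exact congrArg _ (coeff_rename_equiv _ f α)

theorem equivMapDomain_sumComm_apply (α : Fin n ⊕ Fin n →₀ ℕ) (i : Fin n ⊕ Fin n) :
    equivMapDomain (Equiv.sumComm (Fin n) (Fin n)) α i = α i.swap := rfl

theorem sigmaConj_sigmaConj (f : 𝒪) : sigmaConj (sigmaConj f) = f := by
  ext α
  rw [coeff_sigmaConj, coeff_sigmaConj, Complex.conj_conj]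
  congr 2
  ext i
  rw [equivMapDomain_sumComm_apply, equivMapDomain_sumComm_apply, Sum.swap_swap]

theorem coeff_single_sigmaConj (i : Fin n ⊕ Fin n) (f : 𝒪) :
    coeff (single i 1) (sigmaConj f) = starRingEnd ℂ (coeff (single i.swap 1) f) := by
  rw [coeff_sigmaConj, equivMapDomain_single]
  rfl

theorem dz_sigmaConj (f : 𝒪) : dz (sigmaConj f) = star (dζ f) :=
  funext fun j => coeff_single_sigmaConj (Sum.inl j) f

theorem dζ_sigmaConj (f : 𝒪) : dζ (sigmaConj f) = star (dz f) :=
  funext fun j => coeff_single_sigmaConj (Sum.inr j) f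

theorem constantCoeff_sigmaConj (f : 𝒪) :
    constantCoeff (sigmaConj f) = starRingEnd ℂ (constantCoeff f) := by
  rw [← coeff_zero_eq_constantCoeff_apply, coeff_sigmaConj, equivMapDomain_zero,
    coeff_zero_eq_constantCoeff_apply]

theorem sigmaConj_psDeriv (i : Fin n ⊕ Fin n) (f : 𝒪) :
    sigmaConj (psDeriv i f) = psDeriv i.swap (sigmaConj f) := by
  ext α
  have hα : equivMapDomain (Equiv.sumComm (Fin n) (Fin n)) (α + single i.swap 1) =
      equivMapDomain (Equiv.sumComm (Fin n) (Fin n)) α + single i 1 := by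
    ext j
    simp only [Finsupp.add_apply, equivMapDomain_sumComm_apply, Finsupp.single_apply,
      Sum.swap_leftInverse.injective.eq_iff]
  rw [coeff_sigmaConj, coeff_psDeriv, coeff_psDeriv, map_mul, map_natCast, coeff_sigmaConj, hα,
    equivMapDomain_sumComm_apply]

theorem sigmaConj_apply10_sigmaConj (a : Fin n → 𝒪) (h : 𝒪) :
    sigmaConj (apply10 a (sigmaConj h)) = ∑ l, sigmaConj (a l) * psDeriv (Sum.inr l) h := by
  simp only [← sigmaHom_apply, apply10, map_sum, map_mul]
  simp only [sigmaHom_apply, sigmaConj_psDeriv, sigmaConj_sigmaConj]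
  rfl

theorem star_swap_mem_annihilator {I : Ideal 𝒪} (hsig : ∀ f ∈ I, sigmaConj f ∈ I)
    {a b : Fin n → ℂ} (hab : (a, b) ∈ annihilator I) : (star b, star a) ∈ annihilator I :=
  fun f hf => by
    have := congrArg star (hab _ (hsig f hf))
    rw [dz_sigmaConj, dζ_sigmaConj, star_add, star_zero, ← star_dotProduct_star,
      ← star_dotProduct_star, star_star, star_star, add_comm, dotProduct_comm (dz f),
      dotProduct_comm (dζ f)] at this
    exact this

-- The `g x` (`x ∈ K`) lie in `I`, and their `ζ`-differentials are a reduced echelon basis, with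
-- pivots `K`, of the `ζ`-differentials of `I`.
def IsZetaEchelon (I : Ideal 𝒪) (K : Finset (Fin n)) (g : Fin n → 𝒪) : Prop :=
  IsDeltaFamily (I.restrictScalars ℂ) dζ K g ∧
    ∀ f ∈ I, dζ f = ∑ x ∈ K, dζ f x • dζ (g x)

theorem exists_isZetaEchelon (I : Ideal 𝒪) : ∃ K g, IsZetaEchelon I K g :=
  exists_isDeltaFamily_spanning (I.restrictScalars ℂ) dζ

noncomputable def tangentVec (K : Finset (Fin n)) (g : Fin n → 𝒪) (j : Fin n) :
    Fin n → ℂ :=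
  Pi.single j 1 - ∑ l ∈ K, dζ (g l) j • Pi.single l 1

variable {I : Ideal (MvPowerSeries (Fin n ⊕ Fin n) ℂ)} {K : Finset (Fin n)}
  {g : Fin n → MvPowerSeries (Fin n ⊕ Fin n) ℂ}

theorem tangentVec_dotProduct_dζ (hKg : IsZetaEchelon I K g) {f : 𝒪} (hf : f ∈ I)
    (j : Fin n) : tangentVec K g j ⬝ᵥ dζ f = 0 := by
  have hj := congrFun (hKg.2 f hf) j
  simp only [Finset.sum_apply, Pi.smul_apply, smul_eq_mul] at hj
  rw [tangentVec, sub_dotProduct, single_one_dotProduct, sum_dotProduct, hj, sub_eq_zero]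
  exact Finset.sum_congr rfl fun x _ => by rw [smul_dotProduct, single_one_dotProduct,
    smul_eq_mul, mul_comm]

theorem tangentVec_apply_of_notMem {l : Fin n} (hl : l ∉ K) (j : Fin n) :
    tangentVec K g j l = (Pi.single j 1 : Fin n → ℂ) l := by
  rw [tangentVec, Pi.sub_apply, Finset.sum_apply, Finset.sum_eq_zero, sub_zero]
  intro x hx
  rw [Pi.smul_apply, Pi.single_eq_of_ne (ne_of_mem_of_not_mem hx hl).symm, smul_zero]

theorem star_tangentVec_mem_H10at0 (hsig : ∀ f ∈ I, sigmaConj f ∈ I)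
    (hKg : IsZetaEchelon I K g) (j : Fin n) : star (tangentVec K g j) ∈ H10at0 I :=
  fun f hf => by
    have := tangentVec_dotProduct_dζ hKg (hsig f hf) j
    rw [dζ_sigmaConj] at this
    change star (tangentVec K g j) ⬝ᵥ dz f = 0
    rw [star_dotProduct, dotProduct_comm, this, star_zero]

theorem psDeriv_inr_mem (hsig : ∀ f ∈ I, sigmaConj f ∈ I) (hCR : IsCRIdeal I)
    (hKg : IsZetaEchelon I K g) {h : 𝒪} (hh : h ∈ I)
    (hfree : ∀ x ∈ K, h ∈ freeOf (Sum.inr x)) {l₀ : Fin n} (hl₀ : l₀ ∉ K) :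
    psDeriv (Sum.inr l₀) h ∈ I := by
  choose a ha using fun j : {j // j ∉ K} => hCR _ (star_tangentVec_mem_H10at0 hsig hKg j.1)
  -- The conjugated fields `∑ₗ σ(a j l) ∂_{ζₗ}` preserve `I`; on `h` they act through `M`,
  -- which is the identity at `0`.
  let M : Matrix {j // j ∉ K} {j // j ∉ K} 𝒪 := fun j l => sigmaConj (a j l)
  have hM : constantCoeff.mapMatrix M = 1 := by
    ext j l
    rw [RingHom.mapMatrix_apply, Matrix.map_apply, constantCoeff_sigmaConj, (ha j).2,
      Pi.star_apply, Complex.star_def, Complex.conj_conj, tangentVec_apply_of_notMem l.2,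
      Pi.single_apply, Matrix.one_apply]
    simp only [← Subtype.ext_iff, eq_comm]
  have hdet : IsUnit M.det := by
    rw [isUnit_iff_constantCoeff, RingHom.map_det, hM, det_one]
    exact isUnit_one
  refine Matrix.mem_ideal_of_mulVec_mem hdet (v := fun l => psDeriv (Sum.inr l.1) h)
    (fun j => ?_) ⟨l₀, hl₀⟩
  have hmem := hsig _ ((ha j).1 _ (hsig h hh))
  rwa [sigmaConj_apply10_sigmaConj, ← Fintype.sum_subtype_add_sum_subtype (· ∈ K),
    Finset.sum_eq_zero fun l _ => by rw [psDeriv_eq_zero_of_mem_freeOf (hfree l l.2), mul_zero],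
    zero_add] at hmem

theorem iterate_psDeriv_inr_mem (hsig : ∀ f ∈ I, sigmaConj f ∈ I) (hCR : IsCRIdeal I)
    (hKg : IsZetaEchelon I K g) {h : 𝒪} (hh : h ∈ I)
    (hfree : ∀ x ∈ K, h ∈ freeOf (Sum.inr x)) {l : Fin n} (hl : l ∉ K) (k : ℕ) :
    (psDeriv (Sum.inr l))^[k] h ∈ I ∧
      ∀ x ∈ K, (psDeriv (Sum.inr l))^[k] h ∈ freeOf (Sum.inr x) := by
  induction k with
  | zero => exact ⟨hh, hfree⟩
  | succ k ih =>
    rw [Function.iterate_succ_apply']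
    exact ⟨psDeriv_inr_mem hsig hCR hKg ih.1 ih.2 hl,
      fun x hx => psDeriv_mem_freeOf _ (ih.2 x hx)⟩

theorem substZero_image_inr_mem (hFG : I.FG) (hsig : ∀ f ∈ I, sigmaConj f ∈ I)
    (hCR : IsCRIdeal I) (hKg : IsZetaEchelon I K g) (T : Finset (Fin n))
    (hT : ∀ l ∈ T, l ∉ K) {h : 𝒪} (hh : h ∈ I)
    (hfree : ∀ x ∈ K, h ∈ freeOf (Sum.inr x)) :
    substZero (Sum.inr '' (T : Set (Fin n))) h ∈ I := by
  induction T using Finset.induction_on with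
  | empty => rwa [Finset.coe_empty, Set.image_empty, substZero_empty]
  | insert y T _ ih =>
    rw [Finset.coe_insert, Set.image_insert_eq, substZero_insert]
    exact substZero_mem_of_iterate_psDeriv_mem hFG _ fun k =>
      (iterate_psDeriv_inr_mem hsig hCR hKg (ih fun l hl => hT l (Finset.mem_insert_of_mem hl))
        (fun x hx => substZero_mem_freeOf_of_mem _ (hfree x hx))
        (hT y (Finset.mem_insert_self y T)) k).1

theorem exists_mem_dependsOnlyOn_inl (hFG : I.FG) (hI0 : I ≤ RingHom.ker constantCoeff)
    (hsig : ∀ f ∈ I, sigmaConj f ∈ I) (hCR : IsCRIdeal I) {f : 𝒪} (hf : f ∈ I)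
    (hf0 : dζ f = 0) : ∃ h ∈ I, DependsOnlyOn h (Set.range Sum.inl) ∧ dz h = dz f := by
  obtain ⟨K, g, hKg⟩ := exists_isZetaEchelon I
  obtain ⟨h₁, hI₁, hfree₁, hlin₁, -⟩ := exists_mem_forall_mem_freeOf
    hI0 (K.map Function.Embedding.inr) (Sum.elim 0 g)
    (by
      simp only [Finset.mem_map, Function.Embedding.inr_apply, forall_exists_index, and_imp]
      rintro _ x hx rfl
      exact (hKg.1 x hx).1)
    (by
      simp only [Finset.mem_map, Function.Embedding.inr_apply, forall_exists_index, and_imp]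
      rintro _ x hx rfl _ x' hx' rfl
      simp only [Sum.elim_inr, Sum.inr.injEq]
      exact (hKg.1 x hx).2 x' hx')
    f hf (by
      simp only [Finset.mem_map, Function.Embedding.inr_apply, forall_exists_index, and_imp]
      rintro _ x _ rfl
      exact congrFun hf0 x)
  set T := Finset.univ.filter (· ∉ K)
  refine ⟨substZero (Sum.inr '' (T : Set (Fin n))) h₁,
    substZero_image_inr_mem hFG hsig hCR hKg T (fun l hl => (Finset.mem_filter.mp hl).2) hI₁
      fun x hx => hfree₁ _ (Finset.mem_map_of_mem _ hx), ?_, ?_⟩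
  · rintro α ⟨_ | l, hl, hα⟩
    · exact absurd (Set.mem_range_self _) hl
    by_cases hlK : l ∈ K
    · exact substZero_mem_freeOf_of_mem _ (hfree₁ _ (Finset.mem_map_of_mem _ hlK)) α hα
    · exact substZero_mem_freeOf (Set.mem_image_of_mem _ (by simp [T, hlK])) h₁ α hα
  · funext j
    rw [dz_apply, coeff_single_substZero (by simp), hlin₁]
    rfl

theorem dotProduct_dz_eq_zero_of_dζ_eq_zero (hFG : I.FG)
    (hI0 : I ≤ RingHom.ker constantCoeff) (hsig : ∀ f ∈ I, sigmaConj f ∈ I)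
    (hCR : IsCRIdeal I)
    {w : Fin n → ℂ} (hw : w ∈ T0IntrCx I) {f : 𝒪} (hf : f ∈ I) (hf0 : dζ f = 0) :
    w ⬝ᵥ dz f = 0 := by
  obtain ⟨h, hI, hdep, hdz⟩ := exists_mem_dependsOnlyOn_inl hFG hI0 hsig hCR hf hf0
  rw [← hdz]
  exact hw h hI hdep

theorem exists_mem_annihilator_of_mem_T0IntrCx (hFG : I.FG)
    (hI0 : I ≤ RingHom.ker constantCoeff) (hsig : ∀ f ∈ I, sigmaConj f ∈ I)
    (hCR : IsCRIdeal I)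
    {w : Fin n → ℂ} (hw : w ∈ T0IntrCx I) : ∃ q, (w, q) ∈ annihilator I := by
  obtain ⟨K, g, hKg⟩ := exists_isZetaEchelon I
  -- `f - ∑ₓ dζ f x • g x` has no `ζ`-differential, so `w` annihilates its `z`-differential.
  refine ⟨-∑ x ∈ K, (w ⬝ᵥ dz (g x)) • Pi.single x 1, fun f hf => ?_⟩
  have hr : f - ∑ x ∈ K, dζ f x • g x ∈ I :=
    I.sub_mem hf (I.sum_mem fun x hx => Submodule.smul_of_tower_mem _ _ (hKg.1 x hx).1)
  have := dotProduct_dz_eq_zero_of_dζ_eq_zero hFG hI0 hsig hCR hw hr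
    (by simp only [map_sub, map_sum, map_smul, sub_eq_zero]; exact hKg.2 f hf)
  simp only [map_sub, map_sum, map_smul, dotProduct_sub, dotProduct_sum, dotProduct_smul,
    smul_eq_mul] at this
  simp only [neg_dotProduct, sum_dotProduct, smul_dotProduct, single_one_dotProduct,
    smul_eq_mul]
  have hcomm :
      ∑ x ∈ K, w ⬝ᵥ dz (g x) * dζ f x = ∑ x ∈ K, dζ f x * w ⬝ᵥ dz (g x) :=
    Finset.sum_congr rfl fun x _ => mul_comm _ _
  linear_combination this - hcomm

theorem exists_mem_T0Real_eq_add_I_smul (hsig : ∀ f ∈ I, sigmaConj f ∈ I)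
    {w q : Fin n → ℂ} (hwq : (w, q) ∈ annihilator I) :
    ∃ u v, u ∈ T0Real I ∧ v ∈ T0Real I ∧ w = u + Complex.I • v := by
  have hqw := star_swap_mem_annihilator hsig hwq
  refine ⟨(1 / 2 : ℂ) • (w + star q), (-Complex.I / 2) • (w - star q), ?_, ?_, ?_⟩
  · rw [mem_T0Real_iff]
    convert (annihilator I).smul_mem (1 / 2 : ℂ) ((annihilator I).add_mem hwq hqw) using 1
    ext j <;> simp <;> ring
  · rw [mem_T0Real_iff]
    convert (annihilator I).add_mem ((annihilator I).smul_mem (-Complex.I / 2) hwq)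
      ((annihilator I).smul_mem (Complex.I / 2) hqw) using 1
    ext j <;> simp <;> ring
  · ext j
    simp only [Pi.add_apply, Pi.smul_apply, smul_eq_mul, Pi.sub_apply]
    linear_combination (w j - star (q j)) / 2 * Complex.I_sq

end FormalCR

/-- A formal CR submanifold `O` is generic in its intrinsic complexification `V`:
`T₀O + J T₀O = T₀V`. -/
theorem stmt_14 {n : ℕ} (I : Ideal (MvPowerSeries (Fin n ⊕ Fin n) ℂ)) (d : ℕ)
    (hman : IsManifoldIdealOn I d) (hsig : ∀ f ∈ I, sigmaConj f ∈ I)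
    (hCR : IsCRIdeal I) :
    (∀ v ∈ T0Real I, v ∈ T0IntrCx I ∧ (Complex.I • v) ∈ T0IntrCx I) ∧
    (∀ w ∈ T0IntrCx I, ∃ u v, u ∈ T0Real I ∧ v ∈ T0Real I ∧ w = u + Complex.I • v) := by
  obtain ⟨F, hspan, hF0, -⟩ := hman
  have hFG : I.FG := hspan ▸ Submodule.fg_span (Set.finite_range F)
  have hI0 : I ≤ RingHom.ker constantCoeff :=
    hspan ▸ Ideal.span_le.mpr (Set.range_subset_iff.mpr hF0)
  refine ⟨fun v hv => ?_, fun w hw => ?_⟩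
  · have hvv := FormalCR.mem_T0Real_iff.mp hv
    exact ⟨FormalCR.fst_mem_T0IntrCx_of_mem_annihilator hvv,
      FormalCR.fst_mem_T0IntrCx_of_mem_annihilator ((FormalCR.annihilator I).smul_mem _ hvv)⟩
  · obtain ⟨q, hq⟩ := FormalCR.exists_mem_annihilator_of_mem_T0IntrCx hFG hI0 hsig hCR hw
    exact FormalCR.exists_mem_T0Real_eq_add_I_smul hsig hq
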